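/- arXiv:1912.11663 — 2 statements merged into one kernel-verified Lean document; each statement's English description precedes it below -/
import Mathlib

section
/- For every real q > 1, the topology on ℤ induced by the metric d_q(m,n) = ‖m−n‖_q coincides with the Fürstenberg topology. -/
/-!
A set is Fürstenberg-open iff it contains, around each of its points `a`, a residue class
`a + bℤ`. For `d_q`, the ball of radius `q⁻ᵇ` around `a` lies in `a + bℤ`, since `b ∤ a - x` already
forces `‖a - x‖_q ≥ q⁻ᵇ`. Conversely, if `m! ∣ a - x` then every `k ≤ m` divides `a - x`, so
`‖a - x‖_q` is at most the geometric tail `∑_{k > m} q⁻ᵏ`, which tends to `0`.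
-/

/-- The q-norm of an integer n: sum of 1/q^k over positive integers k not dividing n. -/
noncomputable def qnorm (q : ℝ) (n : ℤ) : ℝ :=
  ∑' k : ℕ, if 1 ≤ k ∧ ¬ ((k : ℤ) ∣ n) then 1 / q ^ k else 0

/-- The Fürstenberg topology on ℤ, generated by arithmetic progressions a + bℤ (b ≥ 1). -/
def furstenbergTopology : TopologicalSpace ℤ :=
  TopologicalSpace.generateFrom
    {S | ∃ a b : ℤ, 0 < b ∧ S = {x : ℤ | ∃ n : ℤ, x = a + b * n}}

open Nat

lemma exists_eq_add_mul_iff_modEq {a b x : ℤ} : (∃ n, x = a + b * n) ↔ x ≡ a [ZMOD b] := by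
  rw [Int.modEq_iff_dvd]
  exact ⟨fun ⟨n, hn⟩ => ⟨-n, by rw [hn]; ring⟩, fun ⟨c, hc⟩ => ⟨-c, by linarith⟩⟩

lemma furstenbergTopology_isOpen_iff {A : Set ℤ} :
    furstenbergTopology.IsOpen A ↔ ∀ a ∈ A, ∃ b : ℕ, 0 < b ∧ ∀ x, x ≡ a [ZMOD b] → x ∈ A := by
  constructor
  · intro hA
    induction hA with
    | basic S hS =>
      obtain ⟨a₀, b, hb, rfl⟩ := hS
      intro a ha
      refine ⟨b.toNat, by omega, fun x hx => ?_⟩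
      rw [Int.toNat_of_nonneg hb.le] at hx
      rw [Set.mem_ofPred_eq, exists_eq_add_mul_iff_modEq] at ha ⊢
      exact hx.trans ha
    | univ => exact fun a _ => ⟨1, one_pos, fun x _ => trivial⟩
    | inter S T _ _ ihS ihT =>
      intro a ⟨haS, haT⟩
      obtain ⟨b, hb, hS⟩ := ihS a haS
      obtain ⟨c, hc, hT⟩ := ihT a haT
      refine ⟨b * c, Nat.mul_pos hb hc, fun x hx => ⟨hS x ?_, hT x ?_⟩⟩
      · exact Int.ModEq.of_mul_right c (by exact_mod_cast hx)
      · exact Int.ModEq.of_mul_left b (by exact_mod_cast hx)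
    | sUnion 𝒮 _ ih =>
      rintro a ⟨S, hS𝒮, haS⟩
      obtain ⟨b, hb, hS⟩ := ih S hS𝒮 a haS
      exact ⟨b, hb, fun x hx => ⟨S, hS𝒮, hS x hx⟩⟩
  · intro hA
    refine (@isOpen_iff_forall_mem_open ℤ furstenbergTopology A).mpr fun a ha => ?_
    obtain ⟨b, hb, hbA⟩ := hA a ha
    refine ⟨{x | ∃ n, x = a + b * n}, fun x hx => hbA x (exists_eq_add_mul_iff_modEq.mp hx),
      TopologicalSpace.GenerateOpen.basic _ ⟨a, b, by exact_mod_cast hb, rfl⟩, ⟨0, by ring⟩⟩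

section qnorm

variable {q : ℝ}

lemma qnorm_summand_le_inv_pow (hq : 0 < q) (n : ℤ) (k : ℕ) :
    (if 1 ≤ k ∧ ¬ ((k : ℤ) ∣ n) then 1 / q ^ k else 0) ≤ q⁻¹ ^ k := by
  split
  · rw [one_div, inv_pow]
  · positivity

lemma qnorm_summable (hq : 1 < q) (n : ℤ) :
    Summable fun k : ℕ => if 1 ≤ k ∧ ¬ ((k : ℤ) ∣ n) then 1 / q ^ k else 0 :=
  .of_nonneg_of_le (fun k => by split <;> positivity)
    (qnorm_summand_le_inv_pow (by linarith) n)
    (summable_geometric_of_lt_one (by positivity) (inv_lt_one_of_one_lt₀ hq))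

lemma one_div_pow_le_qnorm (hq : 1 < q) {n : ℤ} {k : ℕ} (hk : 1 ≤ k) (hkn : ¬ (k : ℤ) ∣ n) :
    1 / q ^ k ≤ qnorm q n := by
  have := (qnorm_summable hq n).le_tsum k fun j _ => by split <;> positivity
  rw [qnorm]
  simpa [hk, hkn] using this

lemma dvd_of_qnorm_lt (hq : 1 < q) {n : ℤ} {k : ℕ} (hk : 1 ≤ k) (h : qnorm q n < 1 / q ^ k) :
    (k : ℤ) ∣ n := by
  by_contra hkn
  exact (one_div_pow_le_qnorm hq hk hkn).not_gt h

lemma qnorm_le_of_factorial_dvd (hq : 1 < q) {n : ℤ} {m : ℕ} (h : (m ! : ℤ) ∣ n) :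
    qnorm q n ≤ q⁻¹ ^ (m + 1) / (1 - q⁻¹) := by
  set f : ℕ → ℝ := fun k => if 1 ≤ k ∧ ¬ ((k : ℤ) ∣ n) then 1 / q ^ k else 0
  have hf_head : ∑ k ∈ Finset.range (m + 1), f k = 0 := by
    refine Finset.sum_eq_zero fun k hk => if_neg fun ⟨hk₁, hkn⟩ => hkn ?_
    exact (Int.natCast_dvd_natCast.mpr (dvd_factorial hk₁ (by simpa [Nat.lt_succ_iff] using hk))).trans h
  have hr₀ : 0 ≤ q⁻¹ := by positivity
  have hr₁ : q⁻¹ < 1 := inv_lt_one_of_one_lt₀ hq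
  calc qnorm q n = ∑' k, f (k + (m + 1)) := by
        rw [qnorm, ← (qnorm_summable hq n).sum_add_tsum_nat_add (m + 1), hf_head, zero_add]
    _ ≤ ∑' k, q⁻¹ ^ (k + (m + 1)) :=
        Summable.tsum_le_tsum (fun k => qnorm_summand_le_inv_pow (by linarith) n _)
          ((summable_nat_add_iff _).mpr (qnorm_summable hq n))
          ((summable_nat_add_iff _).mpr (summable_geometric_of_lt_one hr₀ hr₁))
    _ = q⁻¹ ^ (m + 1) / (1 - q⁻¹) := by
        simp_rw [pow_add]
        rw [tsum_mul_right, tsum_geometric_of_lt_one hr₀ hr₁, div_eq_inv_mul, mul_comm]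

lemma exists_qnorm_lt_of_factorial_dvd (hq : 1 < q) {ε : ℝ} (hε : 0 < ε) :
    ∃ m : ℕ, ∀ n : ℤ, (m ! : ℤ) ∣ n → qnorm q n < ε := by
  have hr₁ : q⁻¹ < 1 := inv_lt_one_of_one_lt₀ hq
  have htail : Filter.Tendsto (fun m : ℕ => q⁻¹ ^ (m + 1) / (1 - q⁻¹)) Filter.atTop (nhds 0) := by
    simpa using ((tendsto_pow_atTop_nhds_zero_of_lt_one (by positivity) hr₁).comp
      (Filter.tendsto_add_atTop_nat 1)).div_const (1 - q⁻¹)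
  obtain ⟨m, hm⟩ := (htail.eventually (gt_mem_nhds hε)).exists
  exact ⟨m, fun n hn => (qnorm_le_of_factorial_dvd hq hn).trans_lt hm⟩

end qnorm

theorem stmt_8 (q : ℝ) (hq : 1 < q) (A : Set ℤ) :
    furstenbergTopology.IsOpen A ↔
      (∀ a ∈ A, ∃ ε : ℝ, 0 < ε ∧ ∀ x : ℤ, qnorm q (a - x) < ε → x ∈ A) := by
  rw [furstenbergTopology_isOpen_iff]
  refine forall₂_congr fun a _ => ⟨?_, ?_⟩
  · rintro ⟨b, hb, hbA⟩
    refine ⟨1 / q ^ b, by positivity, fun x hx => hbA x ?_⟩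
    exact Int.modEq_iff_dvd.mpr (dvd_of_qnorm_lt hq hb hx)
  · rintro ⟨ε, hε, hεA⟩
    obtain ⟨m, hm⟩ := exists_qnorm_lt_of_factorial_dvd hq hε
    exact ⟨m !, factorial_pos m, fun x hx => hεA x (hm _ (Int.modEq_iff_dvd.mp hx))⟩
end

section
/- For q > 1, the Möbius inversion of the q-norm, γ_q(n) = ∑_{i | n} μ(i) ‖n/i‖_q, equals 1/(q−1) − 1/q when n = 1, and equals −1/q^n when n > 1. -/
lemma qnorm_eq (q : ℝ) (hq : 1 < q) (m : ℕ) (hm : 0 < m) :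
    qnorm q (m : ℤ) = 1 / (q - 1) - ∑ k ∈ m.divisors, (1 / q) ^ k := by
  have hq0 : 0 < q := lt_trans one_pos hq
  have hr1 : |1 / q| < 1 := by
    rw [abs_of_pos (by positivity)]
    rw [div_lt_one hq0]; exact hq
  have hsum : Summable (fun k : ℕ => (1 / q) ^ k) := summable_geometric_of_abs_lt_one hr1
  set s : Finset ℕ := insert 0 m.divisors with hs
  have hmem : ∀ k : ℕ, (1 ≤ k ∧ ¬ ((k : ℤ) ∣ (m : ℤ))) ↔ k ∉ s := by
    intro k
    simp only [hs, Finset.mem_insert, Nat.mem_divisors, Int.natCast_dvd_natCast]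
    constructor
    · rintro ⟨h1, h2⟩ h
      rcases h with rfl | ⟨hd, _⟩
      · omega
      · exact h2 hd
    · intro h
      push_neg at h
      exact ⟨Nat.one_le_iff_ne_zero.2 h.1, fun hd => hm.ne' (h.2 hd)⟩
  have key : ∀ k : ℕ, (if 1 ≤ k ∧ ¬ ((k : ℤ) ∣ (m : ℤ)) then 1 / q ^ k else 0)
      = (1 / q) ^ k - (if k ∈ s then (1 / q) ^ k else 0) := by
    intro k
    rw [one_div, ← inv_pow, ← one_div]
    by_cases h : k ∈ s
    · rw [if_neg (fun hc => ((hmem k).1 hc) h), if_pos h]; ring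
    · rw [if_pos ((hmem k).2 h), if_neg h]; ring
  rw [qnorm]
  simp_rw [key]
  rw [Summable.tsum_sub hsum (hsum.summable_of_eq_zero_or_self (fun k => by by_cases h : k ∈ s <;> simp [h]))]
  rw [tsum_geometric_of_abs_lt_one hr1, tsum_eq_sum (s := s) (fun k hk => if_neg hk)]
  rw [Finset.sum_congr rfl (fun k hk => if_pos hk)]
  rw [hs, Finset.sum_insert (by simp)]
  have : (1 - 1 / q)⁻¹ - ((1/q)^0 + ∑ k ∈ m.divisors, (1/q)^k)
      = 1 / (q - 1) - ∑ k ∈ m.divisors, (1 / q) ^ k := by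
    have hq' : q - 1 ≠ 0 := by intro h; linarith
    have : (1 - 1/q)⁻¹ = q / (q-1) := by
      rw [one_sub_div hq0.ne', inv_div]
    rw [this, pow_zero]
    field_simp
    ring
  linarith [this]

open ArithmeticFunction ArithmeticFunction.Moebius in
theorem stmt_19 (q : ℝ) (hq : 1 < q) (n : ℕ) (hn : 0 < n) :
    (n = 1 → ∑ i ∈ n.divisors, (μ i : ℝ) * qnorm q ((n / i : ℕ) : ℤ)
      = 1 / (q - 1) - 1 / q) ∧
    (1 < n → ∑ i ∈ n.divisors, (μ i : ℝ) * qnorm q ((n / i : ℕ) : ℤ)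
      = - (1 / q ^ n)) := by
  set g : ℕ → ℝ := fun m => ∑ k ∈ m.divisors, (1 / q) ^ k with hg
  have hinv : ∑ i ∈ n.divisors, (μ i : ℝ) * g (n / i) = (1 / q) ^ n := by
    have := (sum_eq_iff_sum_mul_moebius_eq (R := ℝ)
      (f := fun k => (1 / q) ^ k) (g := g)).1 (fun m _ => rfl) n hn
    rw [← this, ← Nat.sum_divisorsAntidiagonal (fun i j => (μ i : ℝ) * g j)]
  have hmu : ∑ i ∈ n.divisors, (μ i : ℝ) = if n = 1 then 1 else 0 := by
    have h1 : ((μ * (zeta : ArithmeticFunction ℕ) : ArithmeticFunction ℝ) n) = ∑ i ∈ n.divisors, (μ i : ℝ) := by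
      rw [coe_mul_zeta_apply]
      exact Finset.sum_congr rfl (fun i _ => by simp [intCoe_apply])
    rw [← h1, coe_moebius_mul_coe_zeta, one_apply]
  have hmain : ∑ i ∈ n.divisors, (μ i : ℝ) * qnorm q ((n / i : ℕ) : ℤ)
      = (if n = 1 then (1:ℝ) else 0) * (1 / (q - 1)) - (1 / q) ^ n := by
    have hrw : ∀ i ∈ n.divisors, (μ i : ℝ) * qnorm q ((n / i : ℕ) : ℤ)
        = (μ i : ℝ) * (1 / (q - 1)) - (μ i : ℝ) * g (n / i) := by
      intro i hi
      rw [qnorm_eq q hq (n / i) (Nat.div_pos (Nat.le_of_dvd hn (Nat.dvd_of_mem_divisors hi))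
        (Nat.pos_of_mem_divisors hi)), hg]
      ring
    rw [Finset.sum_congr rfl hrw, Finset.sum_sub_distrib, ← Finset.sum_mul, hmu, hinv]
  constructor
  · intro h
    rw [hmain, if_pos h, one_mul, h, pow_one]
  · intro h
    rw [hmain, if_neg (by omega), zero_mul, zero_sub, div_pow, one_pow]
end
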